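/- arXiv:2211.06265 — 3 statements merged into one kernel-verified Lean document; each statement's English description precedes it below -/
import Mathlib

section
/- Let ν > 0 and let f : ℝ → ℝ be a continuous, bounded, integrable probability density. Define g(x) = ∫ e^{-|z|/ν} f(x - z) dz. Then g is twice continuously differentiable and satisfies -g''(x) + g(x)/ν² = (2/ν) f(x) for all x. -/
open MeasureTheory

private lemma hasDerivAt_Iic_int {h : ℝ → ℝ} (hc : Continuous h)
    (hi : ∀ x : ℝ, IntegrableOn h (Set.Iic x)) (x : ℝ) :
    HasDerivAt (fun x => ∫ y in Set.Iic x, h y) (h x) x := by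
  have key : (fun u : ℝ => ∫ y in Set.Iic u, h y)
      = fun u => (∫ y in Set.Iic 0, h y) + ∫ y in (0:ℝ)..u, h y := by
    funext u
    rw [← intervalIntegral.integral_Iic_sub_Iic (hi 0) (hi u)]
    ring
  rw [key]
  exact (intervalIntegral.integral_hasDerivAt_right (hc.intervalIntegrable _ _)
    (hc.stronglyMeasurableAtFilter _ _) hc.continuousAt).const_add _

private lemma hasDerivAt_Ioi_int {h : ℝ → ℝ} (hc : Continuous h)
    (hi : ∀ x : ℝ, IntegrableOn h (Set.Ioi x)) (x : ℝ) :
    HasDerivAt (fun x => ∫ y in Set.Ioi x, h y) (-(h x)) x := by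
  have key : (fun u : ℝ => ∫ y in Set.Ioi u, h y)
      = fun u => ∫ y in Set.Iic (-u), h (-y) := by
    funext u
    rw [integral_comp_neg_Iic, neg_neg]
  rw [key]
  have hi' : ∀ t : ℝ, IntegrableOn (fun y => h (-y)) (Set.Iic t) := by
    intro t
    have hpres : MeasurePreserving (fun x : ℝ => -x) volume volume :=
      ⟨measurable_neg, Measure.map_neg_eq_self volume⟩
    have hemb : MeasurableEmbedding (fun x : ℝ => -x) :=
      (Homeomorph.neg ℝ).isClosedEmbedding.measurableEmbedding
    have hIci : IntegrableOn h (Set.Ici (-t)) :=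
      (integrableOn_Ici_iff_integrableOn_Ioi (by simp)).2 (hi (-t))
    have hset : (fun x : ℝ => -x) ⁻¹' Set.Ici (-t) = Set.Iic t := by
      ext y; simp
    have := (hpres.integrableOn_comp_preimage hemb (f := h) (s := Set.Ici (-t))).2 hIci
    rw [hset] at this
    exact this
  have h1 := hasDerivAt_Iic_int (hc.comp continuous_neg) hi' (-x)
  have h2 := h1.comp x (hasDerivAt_neg x)
  exact h2.congr_deriv (by simp)

theorem supplementary_ode_for_g (ν : ℝ) (hν : 0 < ν) (f g : ℝ → ℝ)
    (hfc : Continuous f) (hfb : ∃ C, ∀ x, f x ≤ C) (hnn : ∀ x, 0 ≤ f x)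
    (hfi : Integrable f) (h1 : ∫ x, f x = 1)
    (hg : ∀ x, g x = ∫ z, Real.exp (-|z| / ν) * f (x - z)) :
    ContDiff ℝ 2 g ∧ ∀ x, -(deriv (deriv g) x) + g x / ν ^ 2 = (2 / ν) * f x := by
  set A : ℝ → ℝ := fun x => ∫ y in Set.Iic x, Real.exp (y / ν) * f y with hA
  set B : ℝ → ℝ := fun x => ∫ y in Set.Ioi x, Real.exp (-y / ν) * f y with hB
  have hcA : Continuous fun y : ℝ => Real.exp (y / ν) * f y :=
    (Real.continuous_exp.comp (continuous_id.div_const ν)).mul hfc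
  have hcB : Continuous fun y : ℝ => Real.exp (-y / ν) * f y :=
    (Real.continuous_exp.comp (continuous_neg.div_const ν)).mul hfc
  have hAi : ∀ x : ℝ, IntegrableOn (fun y => Real.exp (y / ν) * f y) (Set.Iic x) := by
    intro x
    refine Integrable.mono' ((hfi.restrict).const_mul (Real.exp (x / ν)))
      hcA.aestronglyMeasurable ?_
    filter_upwards [ae_restrict_mem measurableSet_Iic] with y hy
    rw [Real.norm_eq_abs, abs_of_nonneg (mul_nonneg (Real.exp_pos _).le (hnn y))]
    exact mul_le_mul_of_nonneg_right
      (Real.exp_le_exp.2 ((div_le_div_iff_of_pos_right hν).2 hy)) (hnn y)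
  have hBi : ∀ x : ℝ, IntegrableOn (fun y => Real.exp (-y / ν) * f y) (Set.Ioi x) := by
    intro x
    refine Integrable.mono' ((hfi.restrict).const_mul (Real.exp (-x / ν)))
      hcB.aestronglyMeasurable ?_
    filter_upwards [ae_restrict_mem measurableSet_Ioi] with y hy
    rw [Real.norm_eq_abs, abs_of_nonneg (mul_nonneg (Real.exp_pos _).le (hnn y))]
    refine mul_le_mul_of_nonneg_right
      (Real.exp_le_exp.2 ((div_le_div_iff_of_pos_right hν).2 ?_)) (hnn y)
    have : x < y := hy
    linarith
  -- integrability of the shifted kernel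
  have hHi : ∀ x : ℝ, Integrable (fun y => Real.exp (-|x - y| / ν) * f y) := by
    intro x
    refine Integrable.mono' hfi
      (((Real.continuous_exp.comp
        (((continuous_const.sub continuous_id).abs.neg).div_const ν)).mul
        hfc).aestronglyMeasurable) ?_
    filter_upwards with y
    rw [Real.norm_eq_abs, abs_of_nonneg (mul_nonneg (Real.exp_pos _).le (hnn y))]
    have he : Real.exp (-|x - y| / ν) ≤ 1 :=
      Real.exp_le_one_iff.2 (div_nonpos_of_nonpos_of_nonneg (neg_nonpos.2 (abs_nonneg _)) hν.le)
    calc Real.exp (-|x - y| / ν) * f y ≤ 1 * f y :=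
          mul_le_mul_of_nonneg_right he (hnn y)
      _ = f y := one_mul _
  -- representation of g
  have hrep : ∀ x, g x = Real.exp (-x / ν) * A x + Real.exp (x / ν) * B x := by
    intro x
    rw [hg x]
    have step1 : (∫ z, Real.exp (-|z| / ν) * f (x - z))
        = ∫ y, Real.exp (-|x - y| / ν) * f y := by
      rw [← MeasureTheory.integral_sub_left_eq_self
        (fun y => Real.exp (-|x - y| / ν) * f y) volume x]
      congr 1
      funext z
      rw [sub_sub_cancel]
    rw [step1, ← intervalIntegral.integral_Iic_add_Ioi ((hHi x).integrableOn)
      ((hHi x).integrableOn)]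
    congr 1
    · rw [hA, ← integral_const_mul]
      refine setIntegral_congr_fun measurableSet_Iic fun y hy => ?_
      have hy' : y ≤ x := hy
      rw [abs_of_nonneg (by linarith), ← mul_assoc, ← Real.exp_add]
      congr 2
      field_simp
      ring
    · rw [hB, ← integral_const_mul]
      refine setIntegral_congr_fun measurableSet_Ioi fun y hy => ?_
      have hy' : x < y := hy
      rw [abs_of_nonpos (by linarith), ← mul_assoc, ← Real.exp_add]
      congr 2
      field_simp
      ring
  -- derivative facts
  have hA' : ∀ x : ℝ, HasDerivAt A (Real.exp (x / ν) * f x) x :=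
    fun x => hasDerivAt_Iic_int hcA hAi x
  have hB' : ∀ x : ℝ, HasDerivAt B (-(Real.exp (-x / ν) * f x)) x :=
    fun x => hasDerivAt_Ioi_int hcB hBi x
  have hep : ∀ x : ℝ, HasDerivAt (fun x : ℝ => Real.exp (x / ν))
      (Real.exp (x / ν) * (1 / ν)) x :=
    fun x => ((hasDerivAt_id x).div_const ν).exp
  have hem : ∀ x : ℝ, HasDerivAt (fun x : ℝ => Real.exp (-x / ν))
      (Real.exp (-x / ν) * (-1 / ν)) x :=
    fun x => (((hasDerivAt_id x).neg).div_const ν).exp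
  have hcancel : ∀ x : ℝ, Real.exp (-x / ν) * Real.exp (x / ν) = 1 := by
    intro x
    rw [← Real.exp_add, neg_div, neg_add_cancel, Real.exp_zero]
  set G2 : ℝ → ℝ := fun x => (Real.exp (x / ν) * B x - Real.exp (-x / ν) * A x) / ν
    with hG2
  have hg' : ∀ x : ℝ, HasDerivAt g (G2 x) x := by
    intro x
    have hd : HasDerivAt (fun x => Real.exp (-x / ν) * A x + Real.exp (x / ν) * B x)
        ((Real.exp (-x / ν) * (-1 / ν) * A x + Real.exp (-x / ν) * (Real.exp (x / ν) * f x))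
         + (Real.exp (x / ν) * (1 / ν) * B x + Real.exp (x / ν) * (-(Real.exp (-x / ν) * f x)))) x :=
      ((hem x).mul (hA' x)).add ((hep x).mul (hB' x))
    have he : g = fun x => Real.exp (-x / ν) * A x + Real.exp (x / ν) * B x := funext hrep
    rw [he]
    convert hd using 1
    rw [hG2]
    ring
  have hg'2 : ∀ x : ℝ, HasDerivAt G2 (g x / ν ^ 2 - (2 / ν) * f x) x := by
    intro x
    have hd : HasDerivAt (fun x => (Real.exp (x / ν) * B x - Real.exp (-x / ν) * A x) / ν)
        (((Real.exp (x / ν) * (1 / ν) * B x + Real.exp (x / ν) * (-(Real.exp (-x / ν) * f x)))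
          - (Real.exp (-x / ν) * (-1 / ν) * A x + Real.exp (-x / ν) * (Real.exp (x / ν) * f x))) / ν) x :=
      (((hep x).mul (hB' x)).sub ((hem x).mul (hA' x))).div_const ν
    rw [hG2]
    convert hd using 1
    rw [hrep x]
    have c2 : Real.exp (x / ν) * Real.exp (-x / ν) = 1 := by
      rw [mul_comm]; exact hcancel x
    linear_combination (2 * f x / ν) * c2
  have hdg : deriv g = G2 := funext fun x => (hg' x).deriv
  have hdG2 : ∀ x, deriv G2 x = g x / ν ^ 2 - (2 / ν) * f x := fun x => (hg'2 x).deriv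
  constructor
  · have hgc : Continuous g := by
      have : Differentiable ℝ g := fun x => (hg' x).differentiableAt
      exact this.continuous
    show ContDiff ℝ 2 g
    rw [(by norm_num : (2 : WithTop ℕ∞) = 1 + 1), contDiff_succ_iff_deriv]
    refine ⟨fun x => (hg' x).differentiableAt, by simp, ?_⟩
    rw [hdg, contDiff_one_iff_deriv]
    refine ⟨fun x => (hg'2 x).differentiableAt, ?_⟩
    have : deriv G2 = fun x => g x / ν ^ 2 - (2 / ν) * f x := funext hdG2
    rw [this]
    exact (hgc.div_const _).sub (continuous_const.mul hfc)
  · intro x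
    rw [hdg, hdG2 x]
    ring
end

section
/- Let ν > 0 and let f : ℝ → ℝ be a continuous, bounded, integrable probability density with finite first moment. Define g(x) = ∫ e^{-|z|/ν} f(x - z) dz and h(x) = ∫ z e^{-|z|/ν} f(x - z) dz. Then h is twice continuously differentiable and satisfies -h''(x) + h(x)/ν² = -2 g'(x) for all x. -/
open MeasureTheory Real Set

namespace SuppODE

noncomputable def K (ν u : ℝ) : ℝ := Real.exp (-|u| / ν)
noncomputable def Kd (ν u : ℝ) : ℝ := -(u / |u|) / ν * Real.exp (-|u| / ν)
noncomputable def L (ν u : ℝ) : ℝ := u * Real.exp (-|u| / ν)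
noncomputable def Ld (ν u : ℝ) : ℝ := (1 - |u| / ν) * Real.exp (-|u| / ν)
noncomputable def Ld2 (ν u : ℝ) : ℝ := u / |u| * ((|u| / ν - 2) / ν) * Real.exp (-|u| / ν)

variable {ν : ℝ} (hν : 0 < ν)

-- elementary exponential bounds
lemma E1 {s : ℝ} (hs : 0 ≤ s) : Real.exp (-s) ≤ 1 := by
  rw [Real.exp_le_one_iff]; linarith

lemma E2 {s : ℝ} (hs : 0 ≤ s) : s * Real.exp (-s) ≤ 1 := by
  have h1 : s ≤ Real.exp s := by
    have := Real.add_one_le_exp s; linarith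
  have h2 : s * Real.exp (-s) ≤ Real.exp s * Real.exp (-s) :=
    mul_le_mul_of_nonneg_right h1 (Real.exp_pos _).le
  calc s * Real.exp (-s) ≤ Real.exp s * Real.exp (-s) := h2
    _ = 1 := by rw [← Real.exp_add]; simp

lemma E3 {s : ℝ} (hs : 0 ≤ s) : |1 - s| * Real.exp (-s) ≤ 1 := by
  rcases le_or_gt s 1 with h | h
  · rw [abs_of_nonneg (by linarith)]
    have := E1 hs
    nlinarith [Real.exp_pos (-s)]
  · rw [abs_of_neg (by linarith)]
    have := E2 hs
    nlinarith [Real.exp_pos (-s)]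

lemma E4 {s : ℝ} (hs : 0 ≤ s) : |s - 2| * Real.exp (-s) ≤ 3 := by
  rcases le_or_gt s 2 with h | h
  · rw [abs_of_nonpos (by linarith)]
    have := E1 hs
    nlinarith [Real.exp_pos (-s)]
  · rw [abs_of_nonneg (by linarith)]
    have := E2 hs
    nlinarith [Real.exp_pos (-s)]

lemma sgn_abs_le (u : ℝ) : abs (u / |u|) ≤ 1 := by
  rcases eq_or_ne u 0 with rfl | hu
  · simp
  · rw [abs_div, abs_abs, div_self (abs_ne_zero.mpr hu)]

include hν

lemma sdiv_nonneg (u : ℝ) : 0 ≤ |u| / ν := div_nonneg (abs_nonneg u) hν.le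

lemma bound_L (u : ℝ) : |L ν u| ≤ ν := by
  have h := E2 (sdiv_nonneg hν u)
  have e : ν * (|u| / ν) = |u| := by field_simp
  rw [L, abs_mul, Real.abs_exp, neg_div]
  nlinarith [Real.exp_pos (-(|u| / ν))]

lemma bound_Ld (u : ℝ) : |Ld ν u| ≤ 1 := by
  have h := E3 (sdiv_nonneg hν u)
  rw [Ld, abs_mul, Real.abs_exp, neg_div]
  exact h

lemma bound_Kd (u : ℝ) : |Kd ν u| ≤ 1 / ν := by
  have h1 := sgn_abs_le u
  have h2 : Real.exp (-|u| / ν) ≤ 1 := by rw [neg_div]; exact E1 (sdiv_nonneg hν u)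
  rw [Kd, abs_mul, Real.abs_exp, abs_div, abs_neg, abs_of_pos hν]
  have h3 : (0:ℝ) ≤ abs (u / |u|) := abs_nonneg _
  have h4 : (0:ℝ) < Real.exp (-|u| / ν) := Real.exp_pos _
  rw [div_mul_eq_mul_div, div_le_div_iff₀ (by positivity) hν]
  nlinarith [mul_le_mul h1 h2 h4.le (by norm_num : (0:ℝ) ≤ 1)]

lemma bound_Ld2 (u : ℝ) : |Ld2 ν u| ≤ 3 / ν := by
  have h := E4 (sdiv_nonneg hν u)
  have h1 := sgn_abs_le u
  have h3 : (0:ℝ) ≤ abs (u / |u|) := abs_nonneg _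
  have h4 : (0:ℝ) < Real.exp (-(|u| / ν)) := Real.exp_pos _
  have h5 : (0:ℝ) ≤ abs (|u| / ν - 2) := abs_nonneg _
  rw [Ld2, abs_mul, abs_mul, Real.abs_exp, abs_div (abs u / ν - 2) ν, abs_of_pos hν, neg_div]
  calc abs (u / |u|) * (abs (abs u / ν - 2) / ν) * Real.exp (-(|u| / ν))
      = (abs (abs u / ν - 2) * Real.exp (-(|u| / ν))) * abs (u / |u|) / ν := by ring
    _ ≤ 3 * 1 / ν := by gcongr
    _ = 3 / ν := by norm_num

end SuppODE

namespace SuppODE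
open Filter

variable {ν : ℝ} (hν : 0 < ν)

lemma hasDerivAt_L (u : ℝ) : HasDerivAt (L ν) (Ld ν u) u := by
  rcases lt_trichotomy u 0 with hu | rfl | hu
  · have h2 : HasDerivAt (fun v : ℝ => Real.exp (v / ν)) (Real.exp (u / ν) * (1 / ν)) u :=
      HasDerivAt.exp ((hasDerivAt_id u).div_const ν)
    have hm := (hasDerivAt_id u).mul h2
    have heq : L ν =ᶠ[nhds u] (fun v => v * Real.exp (v / ν)) := by
      filter_upwards [Iio_mem_nhds hu] with v hv
      rw [mem_Iio] at hv
      simp [L, abs_of_neg hv, neg_neg]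
    refine (hm.congr_of_eventuallyEq heq).congr_deriv ?_
    rw [Ld, abs_of_neg hu, neg_neg]
    field_simp
    simp only [id_eq]; ring
  · rw [hasDerivAt_iff_tendsto_slope]
    have heq : slope (L ν) 0 =ᶠ[nhdsWithin 0 {(0:ℝ)}ᶜ] (fun v => Real.exp (-|v| / ν)) := by
      filter_upwards [self_mem_nhdsWithin] with v hv
      simp only [Set.mem_compl_iff, Set.mem_singleton_iff] at hv
      rw [slope_def_field]
      simp only [L, abs_zero, neg_zero, zero_div, zero_mul, sub_zero]
      exact mul_div_cancel_left₀ _ hv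
    have hc : ContinuousAt (fun v : ℝ => Real.exp (-|v| / ν)) 0 := by fun_prop
    have h0 : Ld ν 0 = Real.exp (-|(0:ℝ)| / ν) := by simp [Ld]
    rw [h0]
    exact Tendsto.congr' heq.symm (hc.tendsto.mono_left nhdsWithin_le_nhds)
  · have h2 : HasDerivAt (fun v : ℝ => Real.exp (-v / ν)) (Real.exp (-u / ν) * (-1 / ν)) u :=
      HasDerivAt.exp (((hasDerivAt_id u).neg).div_const ν)
    have hm := (hasDerivAt_id u).mul h2
    have heq : L ν =ᶠ[nhds u] (fun v => v * Real.exp (-v / ν)) := by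
      filter_upwards [Ioi_mem_nhds hu] with v hv
      rw [mem_Ioi] at hv
      simp [L, abs_of_pos hv]
    refine (hm.congr_of_eventuallyEq heq).congr_deriv ?_
    rw [Ld, abs_of_pos hu]
    field_simp
    simp only [id_eq]; ring

lemma hasDerivAt_K {u : ℝ} (hu : u ≠ 0) : HasDerivAt (K ν) (Kd ν u) u := by
  rcases hu.lt_or_gt with hu | hu
  · have hm : HasDerivAt (fun v : ℝ => Real.exp (v / ν)) (Real.exp (u / ν) * (1 / ν)) u :=
      HasDerivAt.exp ((hasDerivAt_id u).div_const ν)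
    have heq : K ν =ᶠ[nhds u] (fun v => Real.exp (v / ν)) := by
      filter_upwards [Iio_mem_nhds hu] with v hv
      rw [mem_Iio] at hv
      simp [K, abs_of_neg hv, neg_neg]
    refine (hm.congr_of_eventuallyEq heq).congr_deriv ?_
    rw [Kd, abs_of_neg hu, neg_neg]
    rw [div_neg, div_self hu.ne]
    ring
  · have hm : HasDerivAt (fun v : ℝ => Real.exp (-v / ν)) (Real.exp (-u / ν) * (-1 / ν)) u :=
      HasDerivAt.exp (((hasDerivAt_id u).neg).div_const ν)
    have heq : K ν =ᶠ[nhds u] (fun v => Real.exp (-v / ν)) := by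
      filter_upwards [Ioi_mem_nhds hu] with v hv
      rw [mem_Ioi] at hv
      simp [K, abs_of_pos hv]
    refine (hm.congr_of_eventuallyEq heq).congr_deriv ?_
    rw [Kd, abs_of_pos hu, div_self hu.ne']
    ring

lemma hasDerivAt_Ld {u : ℝ} (hu : u ≠ 0) : HasDerivAt (Ld ν) (Ld2 ν u) u := by
  rcases hu.lt_or_gt with hu | hu
  · have h1 : HasDerivAt (fun v : ℝ => 1 - -v / ν) (0 - -1 / ν) u :=
      (hasDerivAt_const u 1).sub (((hasDerivAt_id u).neg).div_const ν)
    have h2 : HasDerivAt (fun v : ℝ => Real.exp (v / ν)) (Real.exp (u / ν) * (1 / ν)) u :=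
      HasDerivAt.exp ((hasDerivAt_id u).div_const ν)
    have hm := h1.mul h2
    have heq : Ld ν =ᶠ[nhds u] (fun v => (1 - -v / ν) * Real.exp (v / ν)) := by
      filter_upwards [Iio_mem_nhds hu] with v hv
      rw [mem_Iio] at hv
      simp [Ld, abs_of_neg hv, neg_neg]
    refine (hm.congr_of_eventuallyEq heq).congr_deriv ?_
    rw [Ld2, abs_of_neg hu, neg_neg, div_neg, div_self hu.ne]
    field_simp
    ring
  · have h1 : HasDerivAt (fun v : ℝ => 1 - v / ν) (0 - 1 / ν) u :=
      (hasDerivAt_const u 1).sub ((hasDerivAt_id u).div_const ν)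
    have h2 : HasDerivAt (fun v : ℝ => Real.exp (-v / ν)) (Real.exp (-u / ν) * (-1 / ν)) u :=
      HasDerivAt.exp (((hasDerivAt_id u).neg).div_const ν)
    have hm := h1.mul h2
    have heq : Ld ν =ᶠ[nhds u] (fun v => (1 - v / ν) * Real.exp (-v / ν)) := by
      filter_upwards [Ioi_mem_nhds hu] with v hv
      rw [mem_Ioi] at hv
      simp [Ld, abs_of_pos hv]
    refine (hm.congr_of_eventuallyEq heq).congr_deriv ?_
    rw [Ld2, abs_of_pos hu, div_self hu.ne']
    field_simp
    ring

end SuppODE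

namespace SuppODE
open Filter

variable {ν : ℝ} (hν : 0 < ν)

lemma lip_comp_abs {φ φ' : ℝ → ℝ} {c : NNReal} (hφ : ∀ t, HasDerivAt φ (φ' t) t)
    (hb : ∀ t, 0 ≤ t → ‖φ' t‖₊ ≤ c) : LipschitzWith c (fun u : ℝ => φ |u|) := by
  have h1 : LipschitzOnWith c φ (Ici 0) :=
    (convex_Ici (0:ℝ)).lipschitzOnWith_of_nnnorm_deriv_le
      (fun x _ => (hφ x).differentiableAt)
      (fun x hx => by rw [(hφ x).deriv]; exact hb x hx)
  have habs : LipschitzWith 1 (fun u : ℝ => |u|) := by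
    exact lipschitzWith_one_norm (E := ℝ)
  have h2 : LipschitzOnWith (c * 1) (φ ∘ fun u : ℝ => |u|) univ :=
    h1.comp habs.lipschitzOnWith (fun x _ => abs_nonneg x)
  rw [← lipschitzOnWith_univ]
  simpa [Function.comp_def] using h2

include hν

lemma lip_K : LipschitzWith (Real.toNNReal (1/ν)) (K ν) := by
  have hφ : ∀ t : ℝ, HasDerivAt (fun t : ℝ => Real.exp (-t / ν))
      (Real.exp (-t / ν) * (-1 / ν)) t :=
    fun t => HasDerivAt.exp (((hasDerivAt_id t).neg).div_const ν)
  have hb : ∀ t : ℝ, 0 ≤ t → ‖Real.exp (-t / ν) * (-1 / ν)‖₊ ≤ Real.toNNReal (1/ν) := by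
    intro t ht
    rw [← NNReal.coe_le_coe, coe_nnnorm, Real.coe_toNNReal _ (by positivity)]
    rw [Real.norm_eq_abs, abs_mul, Real.abs_exp, abs_div, abs_neg, abs_one, abs_of_pos hν]
    have hE : Real.exp (-t / ν) ≤ 1 := by rw [neg_div]; exact E1 (div_nonneg ht hν.le)
    calc Real.exp (-t / ν) * (1 / ν) ≤ 1 * (1 / ν) :=
          mul_le_mul_of_nonneg_right hE (by positivity)
      _ = 1 / ν := one_mul _
  exact lip_comp_abs hφ hb

lemma lip_Ld : LipschitzWith (Real.toNNReal (3/ν)) (Ld ν) := by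
  have hφ : ∀ t : ℝ, HasDerivAt (fun t : ℝ => (1 - t / ν) * Real.exp (-t / ν))
      ((0 - 1 / ν) * Real.exp (-t / ν) + (1 - t / ν) * (Real.exp (-t / ν) * (-1 / ν))) t :=
    fun t => ((hasDerivAt_const t 1).sub ((hasDerivAt_id t).div_const ν)).mul
      (HasDerivAt.exp (((hasDerivAt_id t).neg).div_const ν))
  have hb : ∀ t : ℝ, 0 ≤ t →
      ‖(0 - 1 / ν) * Real.exp (-t / ν) + (1 - t / ν) * (Real.exp (-t / ν) * (-1 / ν))‖₊
        ≤ Real.toNNReal (3/ν) := by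
    intro t ht
    rw [← NNReal.coe_le_coe, coe_nnnorm, Real.coe_toNNReal _ (by positivity), Real.norm_eq_abs]
    have hs : 0 ≤ t / ν := div_nonneg ht hν.le
    have hE := E4 hs
    have hrw : |(0 - 1 / ν) * Real.exp (-t / ν) + (1 - t / ν) * (Real.exp (-t / ν) * (-1 / ν))|
        = |t / ν - 2| * Real.exp (-(t / ν)) / ν := by
      rw [neg_div]
      rw [show (0 - 1 / ν) * Real.exp (-(t / ν)) + (1 - t / ν) * (Real.exp (-(t / ν)) * (-1 / ν))
          = (t / ν - 2) * Real.exp (-(t / ν)) / ν from by ring]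
      rw [abs_div, abs_mul, Real.abs_exp, abs_of_pos hν]
    rw [hrw]
    gcongr
  exact lip_comp_abs hφ hb

omit hν in
lemma lip_shift_mul {w : ℝ → ℝ} {c : NNReal} (hw : LipschitzWith c w) (y a b : ℝ)
    (hab : (c : ℝ) * |a| ≤ b) (s : Set ℝ) :
    LipschitzOnWith (Real.nnabs b) (fun x => w (x - y) * a) s := by
  rw [lipschitzOnWith_iff_dist_le_mul]
  intro p _ q _
  have h1 : dist (w (p - y) * a) (w (q - y) * a) = dist (w (p - y)) (w (q - y)) * |a| := by
    rw [Real.dist_eq, Real.dist_eq, ← abs_mul]; ring_nf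
  have h2 : dist (w (p - y)) (w (q - y)) ≤ c * dist p q := by
    have := hw.dist_le_mul (p - y) (q - y)
    rwa [dist_sub_right] at this
  have h3 : (b : ℝ) ≤ (Real.nnabs b : ℝ) := by
    rw [Real.coe_nnabs]; exact le_abs_self b
  calc dist (w (p - y) * a) (w (q - y) * a) = dist (w (p - y)) (w (q - y)) * |a| := h1
    _ ≤ (c : ℝ) * dist p q * |a| := by
        apply mul_le_mul_of_nonneg_right h2 (abs_nonneg a)
    _ = ((c : ℝ) * |a|) * dist p q := by ring
    _ ≤ (Real.nnabs b : ℝ) * dist p q := by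
        apply mul_le_mul_of_nonneg_right (hab.trans h3) dist_nonneg

end SuppODE

namespace SuppODE
open Filter

variable {ν : ℝ} (hν : 0 < ν)

lemma cont_L : Continuous (L ν) := by unfold L; fun_prop
lemma cont_Ld : Continuous (Ld ν) := by unfold Ld; fun_prop
lemma meas_Kd : Measurable (Kd ν) := by unfold Kd; fun_prop
lemma meas_Ld2 : Measurable (Ld2 ν) := by unfold Ld2; fun_prop

lemma contAt_Ld2 {u : ℝ} (hu : u ≠ 0) : ContinuousAt (Ld2 ν) u := by
  unfold Ld2
  have c1 : ContinuousAt (fun u : ℝ => u / |u|) u :=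
    continuousAt_id.div continuous_abs.continuousAt (abs_ne_zero.mpr hu)
  have c2 : ContinuousAt (fun u : ℝ => (|u| / ν - 2) / ν) u := by fun_prop
  have c3 : ContinuousAt (fun u : ℝ => Real.exp (-|u| / ν)) u := by fun_prop
  exact (c1.mul c2).mul c3

lemma integ_kernel {f w : ℝ → ℝ} (hfi : Integrable f)
    (hfm : AEStronglyMeasurable f (volume : Measure ℝ)) (hnn : ∀ x, 0 ≤ f x)
    (hw : Measurable w) {C : ℝ} (hC : ∀ u, |w u| ≤ C) (x : ℝ) :
    Integrable (fun y => w (x - y) * f y) := by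
  have hm : AEStronglyMeasurable (fun y => w (x - y) * f y) (volume : Measure ℝ) :=
    ((hw.comp (measurable_const.sub measurable_id)).aestronglyMeasurable.mul hfm)
  apply Integrable.mono (hfi.const_mul C) hm
  filter_upwards with y
  rw [Real.norm_eq_abs, Real.norm_eq_abs, abs_mul]
  calc |w (x - y)| * |f y| ≤ C * |f y| := mul_le_mul_of_nonneg_right (hC _) (abs_nonneg _)
    _ ≤ |C * f y| := by
        rw [abs_mul, abs_of_nonneg (hnn y)]
        exact mul_le_mul_of_nonneg_right (le_abs_self C) (hnn y)

lemma key_identity (u : ℝ) : -(Ld2 ν u) + L ν u / ν ^ 2 = -2 * Kd ν u := by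
  rcases eq_or_ne u 0 with rfl | hu
  · simp [Ld2, L, Kd]
  · have h1 : u / |u| * |u| = u := div_mul_cancel₀ u (abs_ne_zero.mpr hu)
    rw [Ld2, L, Kd]
    have hne : |u| ≠ 0 := abs_ne_zero.mpr hu
    linear_combination (-(Real.exp (-|u| / ν)) / ν ^ 2) * h1

end SuppODE

namespace SuppODE
open Filter

variable {ν : ℝ} (hν : 0 < ν)

lemma cont_K : Continuous (K ν) := by unfold K; fun_prop

include hν

lemma bound_K (u : ℝ) : |K ν u| ≤ 1 := by
  rw [K, Real.abs_exp, neg_div]; exact E1 (sdiv_nonneg hν u)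

end SuppODE

open SuppODE Filter Metric

open SuppODE Filter Metric in
theorem supplementary_ode_for_h (ν : ℝ) (hν : 0 < ν) (f g h : ℝ → ℝ)
    (hfc : Continuous f) (hfb : ∃ C, ∀ x, f x ≤ C) (hnn : ∀ x, 0 ≤ f x)
    (hfi : Integrable f) (h1 : ∫ x, f x = 1)
    (hmom : Integrable (fun x => |x| * f x))
    (hg : ∀ x, g x = ∫ z, Real.exp (-|z| / ν) * f (x - z))
    (hh : ∀ x, h x = ∫ z, z * Real.exp (-|z| / ν) * f (x - z)) :
    ContDiff ℝ 2 h ∧ ∀ x, -(deriv (deriv h) x) + h x / ν ^ 2 = -2 * deriv g x := by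
  have hfm : AEStronglyMeasurable f (volume : Measure ℝ) := hfc.aestronglyMeasurable
  -- convolution representations
  have hH : ∀ x, h x = ∫ y, L ν (x - y) * f y := by
    intro x
    calc h x = ∫ z, L ν z * f (x - z) := by rw [hh]; rfl
      _ = ∫ y, L ν (x - y) * f y := by
          have := integral_sub_left_eq_self (fun z => L ν z * f (x - z)) volume x
          simp only [sub_sub_cancel] at this
          exact this.symm
  have hG : ∀ x, g x = ∫ y, K ν (x - y) * f y := by
    intro x
    calc g x = ∫ z, K ν z * f (x - z) := by rw [hg]; rfl
      _ = ∫ y, K ν (x - y) * f y := by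
          have := integral_sub_left_eq_self (fun z => K ν z * f (x - z)) volume x
          simp only [sub_sub_cancel] at this
          exact this.symm
  have hgfun : g = fun x => ∫ y, K ν (x - y) * f y := funext hG
  have hhfun : h = fun x => ∫ y, L ν (x - y) * f y := funext hH
  have ae_ne : ∀ x₀ : ℝ, ∀ᵐ y : ℝ, y ≠ x₀ := by
    intro x₀
    rw [ae_iff]
    simp only [ne_eq, not_not, Set.setOf_eq_eq_singleton]
    exact measure_singleton x₀
  -- derivative of g
  have hg' : ∀ x₀, HasDerivAt g (∫ y, Kd ν (x₀ - y) * f y) x₀ := by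
    intro x₀
    have main := hasDerivAt_integral_of_dominated_loc_of_lip (μ := (volume : Measure ℝ))
      (F := fun x y => K ν (x - y) * f y) (F' := fun y => Kd ν (x₀ - y) * f y)
      (bound := fun y => f y / ν) (ball_mem_nhds x₀ one_pos)
      (Eventually.of_forall fun x =>
        ((cont_K.comp (continuous_const.sub continuous_id)).mul hfc).aestronglyMeasurable)
      (integ_kernel hfi hfm hnn cont_K.measurable (bound_K hν) x₀)
      (((meas_Kd.comp (measurable_const.sub measurable_id)).aestronglyMeasurable).mul hfm)
      (Eventually.of_forall fun y => by
        refine lip_shift_mul (lip_K hν) y (f y) (f y / ν) ?_ (ball x₀ 1)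
        rw [Real.coe_toNNReal _ (by positivity), abs_of_nonneg (hnn y)]
        exact le_of_eq (by ring))
      (hfi.div_const ν)
      ((ae_ne x₀).mono fun y hy => by
        have hsub : HasDerivAt (fun x : ℝ => x - y) 1 x₀ := (hasDerivAt_id x₀).sub_const y
        have hK : HasDerivAt (K ν) (Kd ν (x₀ - y)) (x₀ - y) :=
          hasDerivAt_K (sub_ne_zero.mpr (Ne.symm hy))
        have := (hK.comp x₀ hsub).mul_const (f y)
        simpa [Function.comp] using this)
    rw [hgfun]
    exact main.2
  -- first derivative of h
  have hh' : ∀ x₀, HasDerivAt h (∫ y, Ld ν (x₀ - y) * f y) x₀ := by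
    intro x₀
    have main := hasDerivAt_integral_of_dominated_loc_of_deriv_le (μ := (volume : Measure ℝ))
      (F := fun x y => L ν (x - y) * f y) (F' := fun x y => Ld ν (x - y) * f y)
      (bound := f) (ball_mem_nhds x₀ one_pos)
      (Eventually.of_forall fun x =>
        ((cont_L.comp (continuous_const.sub continuous_id)).mul hfc).aestronglyMeasurable)
      (integ_kernel hfi hfm hnn cont_L.measurable (bound_L hν) x₀)
      (((cont_Ld.comp (continuous_const.sub continuous_id)).mul hfc).aestronglyMeasurable)
      (Eventually.of_forall fun y x _ => by
        rw [Real.norm_eq_abs, abs_mul, abs_of_nonneg (hnn y)]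
        calc |Ld ν (x - y)| * f y ≤ 1 * f y :=
              mul_le_mul_of_nonneg_right (bound_Ld hν _) (hnn y)
          _ = f y := one_mul _)
      hfi
      (Eventually.of_forall fun y x _ => by
        have hsub : HasDerivAt (fun x : ℝ => x - y) 1 x := (hasDerivAt_id x).sub_const y
        have := ((hasDerivAt_L (ν := ν) (x - y)).comp x hsub).mul_const (f y)
        simpa [Function.comp] using this)
    rw [hhfun]
    exact main.2
  -- second derivative of h
  have hh1' : ∀ x₀, HasDerivAt (fun x => ∫ y, Ld ν (x - y) * f y)
      (∫ y, Ld2 ν (x₀ - y) * f y) x₀ := by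
    intro x₀
    have main := hasDerivAt_integral_of_dominated_loc_of_lip (μ := (volume : Measure ℝ))
      (F := fun x y => Ld ν (x - y) * f y) (F' := fun y => Ld2 ν (x₀ - y) * f y)
      (bound := fun y => 3 / ν * f y) (ball_mem_nhds x₀ one_pos)
      (Eventually.of_forall fun x =>
        ((cont_Ld.comp (continuous_const.sub continuous_id)).mul hfc).aestronglyMeasurable)
      (integ_kernel hfi hfm hnn cont_Ld.measurable (bound_Ld hν) x₀)
      (((meas_Ld2.comp (measurable_const.sub measurable_id)).aestronglyMeasurable).mul hfm)
      (Eventually.of_forall fun y => by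
        refine lip_shift_mul (lip_Ld hν) y (f y) (3 / ν * f y) ?_ (ball x₀ 1)
        rw [Real.coe_toNNReal _ (by positivity), abs_of_nonneg (hnn y)])
      ((hfi.const_mul (3 / ν)))
      ((ae_ne x₀).mono fun y hy => by
        have hsub : HasDerivAt (fun x : ℝ => x - y) 1 x₀ := (hasDerivAt_id x₀).sub_const y
        have hK : HasDerivAt (Ld ν) (Ld2 ν (x₀ - y)) (x₀ - y) :=
          hasDerivAt_Ld (sub_ne_zero.mpr (Ne.symm hy))
        have := (hK.comp x₀ hsub).mul_const (f y)
        simpa [Function.comp] using this)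
    exact main.2
  -- continuity of the second derivative
  have hcont2 : Continuous (fun x => ∫ y, Ld2 ν (x - y) * f y) := by
    rw [continuous_iff_continuousAt]
    intro x₀
    apply continuousAt_of_dominated (bound := fun y => 3 / ν * f y)
    · exact Eventually.of_forall fun x =>
        ((meas_Ld2.comp (measurable_const.sub measurable_id)).aestronglyMeasurable).mul hfm
    · refine Eventually.of_forall fun x => Eventually.of_forall fun y => ?_
      rw [Real.norm_eq_abs, abs_mul, abs_of_nonneg (hnn y)]
      exact mul_le_mul_of_nonneg_right (bound_Ld2 hν _) (hnn y)
    · exact hfi.const_mul (3 / ν)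
    · refine (ae_ne x₀).mono fun y hy => ?_
      have hc : ContinuousAt (Ld2 ν) (x₀ - y) := contAt_Ld2 (sub_ne_zero.mpr (Ne.symm hy))
      have hf : ContinuousAt (fun x : ℝ => x - y) x₀ :=
        (continuous_id.sub continuous_const).continuousAt
      exact (ContinuousAt.comp' (g := Ld2 ν) (f := fun x : ℝ => x - y) (x := x₀) hc hf).mul
        continuousAt_const
  have hdh : deriv h = fun x => ∫ y, Ld ν (x - y) * f y := funext fun x => (hh' x).deriv
  have hdh1 : deriv (fun x => ∫ y, Ld ν (x - y) * f y)
      = fun x => ∫ y, Ld2 ν (x - y) * f y := funext fun x => (hh1' x).deriv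
  constructor
  · rw [show (2 : WithTop ℕ∞) = 1 + 1 from by norm_num]
    refine contDiff_succ_iff_deriv.mpr ⟨fun x => (hh' x).differentiableAt, by simp, ?_⟩
    rw [hdh]
    refine contDiff_one_iff_deriv.mpr ⟨fun x => (hh1' x).differentiableAt, ?_⟩
    rw [hdh1]
    exact hcont2
  · intro x
    rw [hdh, hdh1, (hg' x).deriv, hH x]
    have i1 : Integrable (fun y => Ld2 ν (x - y) * f y) :=
      integ_kernel hfi hfm hnn meas_Ld2 (bound_Ld2 hν) x
    have i2 : Integrable (fun y => L ν (x - y) * f y) :=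
      integ_kernel hfi hfm hnn cont_L.measurable (bound_L hν) x
    have i1' : Integrable (fun y => -(Ld2 ν (x - y) * f y)) (volume : Measure ℝ) := i1.neg
    have i2' : Integrable (fun y => L ν (x - y) * f y / ν ^ 2) (volume : Measure ℝ) :=
      i2.div_const _
    rw [← integral_neg, ← integral_div, ← integral_add i1' i2', ← integral_const_mul]
    refine integral_congr_ae (Eventually.of_forall fun y => ?_)
    have := key_identity (ν := ν) (x - y)
    linear_combination f y * this
end

section
/- Let ν > 0 and let f be a probability density with finite first moment, g(x) = ∫ e^{-|z|/ν} f(x-z) dz, h(x) = ∫ z e^{-|z|/ν} f(x-z) dz, H(x) = ∫_{-∞}^x h(s) ds. Assume f is continuous, bounded, integrable, and that h and g vanish at -∞ together with H''. Then H satisfies -H''(x) + H(x)/ν² = -2 g(x) for all x, and H(x) → 0 as x → -∞. -/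
open MeasureTheory Filter

namespace SuppODE
open Set

noncomputable def ee (ν z : ℝ) : ℝ := Real.exp (-|z| / ν)
noncomputable def kk (ν z : ℝ) : ℝ := z * Real.exp (-|z| / ν)
noncomputable def kk' (ν z : ℝ) : ℝ := (1 - |z| / ν) * Real.exp (-|z| / ν)
noncomputable def KK (ν z : ℝ) : ℝ := -(ν * |z| + ν ^ 2) * Real.exp (-|z| / ν)

lemma cont_ee (ν : ℝ) : Continuous (ee ν) := by
  exact Real.continuous_exp.comp ((continuous_abs.neg).div_const ν)

lemma cont_kk (ν : ℝ) : Continuous (kk ν) := continuous_id.mul (cont_ee ν)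

lemma cont_kk' (ν : ℝ) : Continuous (kk' ν) :=
  (continuous_const.sub (continuous_abs.div_const ν)).mul (cont_ee ν)

lemma cont_KK (ν : ℝ) : Continuous (KK ν) :=
  ((continuous_const.mul continuous_abs).add continuous_const).neg.mul (cont_ee ν)

/-- `u * exp (-u) ≤ 1` for `u ≥ 0`. -/
lemma mul_exp_neg_le_one {u : ℝ} (hu : 0 ≤ u) : u * Real.exp (-u) ≤ 1 := by
  rw [Real.exp_neg, mul_inv_le_iff₀ (Real.exp_pos u), one_mul]
  linarith [Real.add_one_le_exp u, Real.exp_pos u]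

lemma integrable_ee {c : ℝ} (hc : 0 < c) : Integrable (ee c) := by
  have hIoi : IntegrableOn (ee c) (Ioi 0) := by
    have := exp_neg_integrableOn_Ioi 0 (b := 1 / c) (by positivity)
    refine this.congr_fun (fun x hx => ?_) measurableSet_Ioi
    simp only [ee, abs_of_pos (mem_Ioi.mp hx)]
    ring_nf
  have hIic : IntegrableOn (ee c) (Iic 0) := by
    rw [← Measure.map_neg_eq_self (volume : Measure ℝ)]
    have m : MeasurableEmbedding fun x : ℝ => -x := (Homeomorph.neg ℝ).measurableEmbedding
    rw [m.integrableOn_map_iff]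
    have : (ee c) ∘ (fun x : ℝ => -x) = ee c := by
      funext x; simp [ee, Function.comp, abs_neg]
    rw [this]
    simp only [neg_preimage, neg_Iic, neg_zero]
    exact Iff.mpr integrableOn_Ici_iff_integrableOn_Ioi hIoi
  have := hIic.union hIoi
  rwa [Iic_union_Ioi, integrableOn_univ] at this

lemma kk_le {ν : ℝ} (hν : 0 < ν) (z : ℝ) : ‖kk ν z‖ ≤ 2 * ν * ee (2 * ν) z := by
  have h2ν : (0:ℝ) < 2 * ν := by positivity
  have hE : Real.exp (-|z| / ν) = Real.exp (-|z| / (2*ν)) * Real.exp (-|z| / (2*ν)) := by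
    rw [← Real.exp_add]; congr 1; field_simp; ring
  have key : |z| * Real.exp (-|z| / (2*ν)) ≤ 2 * ν := by
    have := mul_exp_neg_le_one (u := |z| / (2*ν)) (by positivity)
    have h := mul_le_mul_of_nonneg_left this h2ν.le
    rw [mul_one] at h
    calc |z| * Real.exp (-|z| / (2*ν))
        = 2 * ν * (|z| / (2*ν) * Real.exp (-(|z| / (2*ν)))) := by
          field_simp
      _ ≤ 2 * ν := by
          rw [neg_div] at *
          exact h
  have hEpos : (0:ℝ) < Real.exp (-|z| / (2*ν)) := Real.exp_pos _
  calc ‖kk ν z‖ = |z| * Real.exp (-|z| / ν) := by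
        simp [kk, abs_mul, Real.abs_exp, Real.norm_eq_abs]
    _ = (|z| * Real.exp (-|z| / (2*ν))) * Real.exp (-|z| / (2*ν)) := by rw [hE]; ring
    _ ≤ 2 * ν * Real.exp (-|z| / (2*ν)) := by
        exact mul_le_mul_of_nonneg_right key hEpos.le
    _ = 2 * ν * ee (2*ν) z := rfl

lemma integrable_kk {ν : ℝ} (hν : 0 < ν) : Integrable (kk ν) := by
  refine Integrable.mono' (((integrable_ee (by positivity : (0:ℝ) < 2*ν)).const_mul (2*ν)))
    (cont_kk ν).aestronglyMeasurable (Eventually.of_forall fun z => ?_)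
  exact kk_le hν z

lemma kk'_le {ν : ℝ} (hν : 0 < ν) (z : ℝ) : ‖kk' ν z‖ ≤ 1 := by
  set u := |z| / ν with hu
  have hu0 : 0 ≤ u := by positivity
  have hE : Real.exp (-|z| / ν) = Real.exp (-u) := by rw [hu, neg_div]
  rw [kk', hE, Real.norm_eq_abs, abs_mul, Real.abs_exp]
  rcases le_total u 1 with h | h
  · have : |1 - u| ≤ 1 := by rw [abs_of_nonneg (by linarith)]; linarith
    have he : Real.exp (-u) ≤ 1 := Real.exp_le_one_iff.mpr (by linarith)
    calc |1 - u| * Real.exp (-u) ≤ 1 * 1 := by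
          exact mul_le_mul this he (Real.exp_pos _).le zero_le_one
      _ = 1 := by ring
  · have : |1 - u| ≤ u := by rw [abs_of_nonpos (by linarith)]; linarith
    calc |1 - u| * Real.exp (-u) ≤ u * Real.exp (-u) :=
          mul_le_mul_of_nonneg_right this (Real.exp_pos _).le
      _ ≤ 1 := mul_exp_neg_le_one hu0

lemma KK_le {ν : ℝ} (hν : 0 < ν) (z : ℝ) : ‖KK ν z‖ ≤ 2 * ν ^ 2 := by
  have h1 : |z| * Real.exp (-|z| / ν) ≤ ν := by
    have := mul_exp_neg_le_one (u := |z| / ν) (by positivity)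
    have h := mul_le_mul_of_nonneg_left this hν.le
    rw [mul_one] at h
    calc |z| * Real.exp (-|z| / ν) = ν * (|z| / ν * Real.exp (-(|z| / ν))) := by
          field_simp
      _ ≤ ν := h
  have h2 : Real.exp (-|z| / ν) ≤ 1 := Real.exp_le_one_iff.mpr (by
    apply div_nonpos_of_nonpos_of_nonneg <;> [exact neg_nonpos.mpr (abs_nonneg z); exact hν.le])
  have hEpos := (Real.exp_pos (-|z| / ν))
  rw [KK, Real.norm_eq_abs, abs_mul, abs_neg, Real.abs_exp,
    abs_of_nonneg (by positivity : (0:ℝ) ≤ ν * |z| + ν ^ 2)]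
  calc (ν * |z| + ν ^ 2) * Real.exp (-|z| / ν)
      = ν * (|z| * Real.exp (-|z| / ν)) + ν ^ 2 * Real.exp (-|z| / ν) := by ring
    _ ≤ ν * ν + ν ^ 2 * 1 := by gcongr
    _ = 2 * ν ^ 2 := by ring


/-- Smooth model on the right half line. -/
lemma hasDerivAt_pos_model (ν x : ℝ) (hν : ν ≠ 0) :
    HasDerivAt (fun z => z * Real.exp (-z / ν)) ((1 - x / ν) * Real.exp (-x / ν)) x := by
  have h1 : HasDerivAt (fun z : ℝ => -z / ν) (-1 / ν) x := by
    simpa using ((hasDerivAt_id x).neg.div_const ν)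
  have h2 : HasDerivAt (fun z : ℝ => Real.exp (-z / ν)) (Real.exp (-x / ν) * (-1 / ν)) x :=
    (Real.hasDerivAt_exp _).comp x h1
  have := (hasDerivAt_id x).mul h2
  refine this.congr_deriv ?_
  simp only [id]
  field_simp
  ring

lemma hasDerivAt_neg_model (ν x : ℝ) (hν : ν ≠ 0) :
    HasDerivAt (fun z => z * Real.exp (z / ν)) ((1 + x / ν) * Real.exp (x / ν)) x := by
  have h1 : HasDerivAt (fun z : ℝ => z / ν) (1 / ν) x := by
    simpa using ((hasDerivAt_id x).div_const ν)
  have h2 : HasDerivAt (fun z : ℝ => Real.exp (z / ν)) (Real.exp (x / ν) * (1 / ν)) x :=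
    (Real.hasDerivAt_exp _).comp x h1
  have := (hasDerivAt_id x).mul h2
  refine this.congr_deriv ?_
  simp only [id]
  field_simp

lemma hasDerivAt_kk {ν : ℝ} (hν : 0 < ν) (x : ℝ) : HasDerivAt (kk ν) (kk' ν x) x := by
  rcases lt_trichotomy x 0 with hx | hx | hx
  · have hev : kk ν =ᶠ[nhds x] fun z => z * Real.exp (z / ν) := by
      filter_upwards [Iio_mem_nhds hx] with z hz
      simp [kk, abs_of_neg (mem_Iio.mp hz), neg_div]
    have := (hasDerivAt_neg_model ν x hν.ne').congr_of_eventuallyEq hev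
    refine this.congr_deriv ?_
    rw [kk', abs_of_neg hx]
    ring_nf
  · subst hx
    rw [hasDerivAt_iff_tendsto_slope]
    have : Tendsto (fun z : ℝ => Real.exp (-|z| / ν)) (nhdsWithin 0 {(0:ℝ)}ᶜ) (nhds (kk' ν 0)) := by
      have hc : Tendsto (fun z : ℝ => Real.exp (-|z| / ν)) (nhds 0) (nhds (Real.exp (-|0| / ν))) :=
        (cont_ee ν).continuousAt
      simp only [abs_zero, neg_zero, zero_div, Real.exp_zero] at hc
      have : kk' ν 0 = 1 := by simp [kk']
      rw [this]
      exact hc.mono_left nhdsWithin_le_nhds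
    refine this.congr' ?_
    filter_upwards [self_mem_nhdsWithin] with z hz
    have hz0 : z ≠ 0 := hz
    simp only [slope_def_field, kk, sub_zero, mul_zero, zero_mul]
    field_simp
  · have hev : kk ν =ᶠ[nhds x] fun z => z * Real.exp (-z / ν) := by
      filter_upwards [Ioi_mem_nhds hx] with z hz
      simp [kk, abs_of_pos (mem_Ioi.mp hz)]
    have := (hasDerivAt_pos_model ν x hν.ne').congr_of_eventuallyEq hev
    refine this.congr_deriv ?_
    rw [kk', abs_of_pos hx]

lemma hasDerivAt_KK_pos_model (ν x : ℝ) (hν : ν ≠ 0) :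
    HasDerivAt (fun z => -(ν * z + ν ^ 2) * Real.exp (-z / ν)) (x * Real.exp (-x / ν)) x := by
  have h1 : HasDerivAt (fun z : ℝ => -z / ν) (-1 / ν) x := by
    simpa using ((hasDerivAt_id x).neg.div_const ν)
  have h2 : HasDerivAt (fun z : ℝ => Real.exp (-z / ν)) (Real.exp (-x / ν) * (-1 / ν)) x :=
    (Real.hasDerivAt_exp _).comp x h1
  have h3 : HasDerivAt (fun z : ℝ => -(ν * z + ν ^ 2)) (-ν) x := by
    exact (((hasDerivAt_id x).const_mul ν).add_const (ν ^ 2)).neg.congr_deriv (by simp)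
  have := h3.mul h2
  refine this.congr_deriv ?_
  field_simp
  ring

lemma hasDerivAt_KK_neg_model (ν x : ℝ) (hν : ν ≠ 0) :
    HasDerivAt (fun z => -(-(ν * z) + ν ^ 2) * Real.exp (z / ν)) (x * Real.exp (x / ν)) x := by
  have h1 : HasDerivAt (fun z : ℝ => z / ν) (1 / ν) x := by
    simpa using ((hasDerivAt_id x).div_const ν)
  have h2 : HasDerivAt (fun z : ℝ => Real.exp (z / ν)) (Real.exp (x / ν) * (1 / ν)) x :=
    (Real.hasDerivAt_exp _).comp x h1
  have h3 : HasDerivAt (fun z : ℝ => -(-(ν * z) + ν ^ 2)) ν x := by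
    exact (((hasDerivAt_id x).const_mul ν).neg.add_const (ν ^ 2)).neg.congr_deriv (by simp)
  have := h3.mul h2
  refine this.congr_deriv ?_
  field_simp
  ring

lemma hasDerivAt_KK {ν : ℝ} (hν : 0 < ν) (x : ℝ) : HasDerivAt (KK ν) (kk ν x) x := by
  rcases lt_trichotomy x 0 with hx | hx | hx
  · have hev : KK ν =ᶠ[nhds x] fun z => -(-(ν * z) + ν ^ 2) * Real.exp (z / ν) := by
      filter_upwards [Iio_mem_nhds hx] with z hz
      have := abs_of_neg (mem_Iio.mp hz)
      simp only [KK, this, neg_div]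
      ring_nf
    have := (hasDerivAt_KK_neg_model ν x hν.ne').congr_of_eventuallyEq hev
    refine this.congr_deriv ?_
    simp [kk, abs_of_neg hx, neg_div, neg_neg]
  · subst hx
    -- use little-o characterization
    have hφ : HasDerivAt (fun t => -(ν * t + ν ^ 2) * Real.exp (-t / ν)) 0 0 := by
      have := hasDerivAt_KK_pos_model ν 0 hν.ne'
      simpa using this
    rw [hasDerivAt_iff_isLittleO] at hφ ⊢
    simp only [sub_zero, zero_mul, smul_zero, sub_zero, smul_eq_mul, mul_zero] at hφ ⊢
    have habs : Tendsto (fun z : ℝ => |z|) (nhds 0) (nhds 0) := by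
      simpa using continuous_abs.tendsto (0:ℝ)
    have h1 := hφ.comp_tendsto habs
    have h2 : (fun z : ℝ => |z|) =O[nhds 0] (fun z : ℝ => z) :=
      Asymptotics.isBigO_of_le _ (fun z => by simp [Real.norm_eq_abs])
    have h3 := h1.trans_isBigO h2
    have : KK ν 0 = -(ν * |(0:ℝ)| + ν ^ 2) * Real.exp (-|(0:ℝ)| / ν) := rfl
    refine h3.congr' ?_ (EventuallyEq.refl _ _)
    filter_upwards with z
    simp [KK, kk, Function.comp]
  · have hev : KK ν =ᶠ[nhds x] fun z => -(ν * z + ν ^ 2) * Real.exp (-z / ν) := by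
      filter_upwards [Ioi_mem_nhds hx] with z hz
      simp [KK, abs_of_pos (mem_Ioi.mp hz)]
    have := (hasDerivAt_KK_pos_model ν x hν.ne').congr_of_eventuallyEq hev
    refine this.congr_deriv ?_
    rw [kk, abs_of_pos hx]

lemma tendsto_ee_atBot {c : ℝ} (hc : 0 < c) : Tendsto (ee c) atBot (nhds 0) := by
  have h1 : Tendsto (fun z : ℝ => -|z| / c) atBot atBot := by
    apply Tendsto.atBot_div_const hc
    exact tendsto_neg_atBot_iff.mpr tendsto_abs_atBot_atTop
  exact Real.tendsto_exp_atBot.comp h1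

lemma tendsto_KK_atBot {ν : ℝ} (hν : 0 < ν) : Tendsto (KK ν) atBot (nhds 0) := by
  have hb : ∀ z, ‖KK ν z‖ ≤ 4 * ν ^ 2 * ee (2 * ν) z := by
    intro z
    have h2ν : (0:ℝ) < 2 * ν := by positivity
    have hE : Real.exp (-|z| / ν) = Real.exp (-|z| / (2*ν)) * Real.exp (-|z| / (2*ν)) := by
      rw [← Real.exp_add]; congr 1; field_simp; ring
    have key : |z| * Real.exp (-|z| / (2*ν)) ≤ 2 * ν := by
      have := mul_exp_neg_le_one (u := |z| / (2*ν)) (by positivity)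
      have h := mul_le_mul_of_nonneg_left this h2ν.le
      rw [mul_one] at h
      calc |z| * Real.exp (-|z| / (2*ν))
          = 2 * ν * (|z| / (2*ν) * Real.exp (-(|z| / (2*ν)))) := by field_simp
        _ ≤ 2 * ν := h
    have hle1 : Real.exp (-|z| / (2*ν)) ≤ 1 := Real.exp_le_one_iff.mpr (by
      apply div_nonpos_of_nonpos_of_nonneg <;>
        [exact neg_nonpos.mpr (abs_nonneg z); exact h2ν.le])
    have hEpos := (Real.exp_pos (-|z| / (2*ν)))
    rw [KK, Real.norm_eq_abs, abs_mul, abs_neg, Real.abs_exp,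
      abs_of_nonneg (by positivity : (0:ℝ) ≤ ν * |z| + ν ^ 2), hE, ee]
    calc (ν * |z| + ν ^ 2) * (Real.exp (-|z| / (2*ν)) * Real.exp (-|z| / (2*ν)))
        = (ν * (|z| * Real.exp (-|z| / (2*ν))) + ν ^ 2 * Real.exp (-|z| / (2*ν)))
            * Real.exp (-|z| / (2*ν)) := by ring
      _ ≤ (ν * (2 * ν) + ν ^ 2 * 1) * Real.exp (-|z| / (2*ν)) := by gcongr
      _ ≤ 4 * ν ^ 2 * Real.exp (-|z| / (2*ν)) := by nlinarith [Real.exp_pos (-|z| / (2*ν))]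
  have hbound : Tendsto (fun z => 4 * ν ^ 2 * ee (2 * ν) z) atBot (nhds 0) := by
    have := (tendsto_ee_atBot (by positivity : (0:ℝ) < 2*ν)).const_mul (4 * ν ^ 2)
    simpa using this
  refine squeeze_zero_norm hb hbound

lemma integral_Iic_kk {ν : ℝ} (hν : 0 < ν) (w : ℝ) : ∫ s in Iic w, kk ν s = KK ν w := by
  have := integral_Iic_of_hasDerivAt_of_tendsto' (f := KK ν) (f' := kk ν) (a := w)
    (fun x _ => hasDerivAt_KK hν x) ((integrable_kk hν).integrableOn) (tendsto_KK_atBot hν)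
  rw [this, sub_zero]

end SuppODE

open Set SuppODE

theorem supplementary_ode_for_H (ν : ℝ) (hν : 0 < ν) (f g h H : ℝ → ℝ)
    (hfc : Continuous f) (hfb : ∃ C, ∀ x, f x ≤ C) (hnn : ∀ x, 0 ≤ f x)
    (hfi : Integrable f) (h1 : ∫ x, f x = 1)
    (hmom : Integrable (fun x => |x| * f x))
    (hg : ∀ x, g x = ∫ z, Real.exp (-|z| / ν) * f (x - z))
    (hh : ∀ x, h x = ∫ z, z * Real.exp (-|z| / ν) * f (x - z))
    (hH : ∀ x, H x = ∫ s in Set.Iic x, h s)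
    (hg_bot : Tendsto g atBot (nhds 0))
    (hh_bot : Tendsto h atBot (nhds 0))
    (hH''_bot : Tendsto (fun x => deriv (deriv H) x) atBot (nhds 0)) :
    (∀ x, -(deriv (deriv H) x) + H x / ν ^ 2 = -2 * g x) ∧
    Tendsto H atBot (nhds 0) := by
  obtain ⟨C, hC⟩ := hfb
  have hfabs : ∀ x, ‖f x‖ ≤ C := fun x => by
    rw [Real.norm_eq_abs, abs_of_nonneg (hnn x)]; exact hC x
  have intK : Integrable (kk ν) := integrable_kk hν
  -- convolution forms
  have h_conv : ∀ x, h x = ∫ y, kk ν (x - y) * f y := by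
    intro x
    have e1 : (∫ y, kk ν (x - y) * f y)
        = ∫ y, (fun z => kk ν z * f (x - z)) (x - y) := by
      congr 1; funext y; simp
    rw [hh x, e1, integral_sub_left_eq_self (fun z => kk ν z * f (x - z)) volume x]
    rfl
  have g_conv : ∀ x, g x = ∫ y, ee ν (x - y) * f y := by
    intro x
    have e1 : (∫ y, ee ν (x - y) * f y)
        = ∫ y, (fun z => ee ν z * f (x - z)) (x - y) := by
      congr 1; funext y; simp
    rw [hg x, e1, integral_sub_left_eq_self (fun z => ee ν z * f (x - z)) volume x]
    rfl
  have prod_int : Integrable (fun p : ℝ × ℝ => kk ν (p.1 - p.2) * f p.2)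
      (volume.prod volume) := by
    have h0 := hfi.convolution_integrand (ContinuousLinearMap.mul ℝ ℝ) intK
    have h2 : (fun p : ℝ × ℝ => kk ν (p.1 - p.2) * f p.2)
        = fun p : ℝ × ℝ => (ContinuousLinearMap.mul ℝ ℝ) (f p.2) (kk ν (p.1 - p.2)) := by
      funext p; simp [mul_comm]
    rw [h2]; exact h0
  have h_int : Integrable h := by
    have := prod_int.integral_prod_left
    exact this.congr (Eventually.of_forall fun s => (h_conv s).symm)
  have h_cont : Continuous h := by
    have hcc : Continuous (fun x => ∫ z, kk ν z * f (x - z)) := by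
      apply continuous_of_dominated (bound := fun z => ‖kk ν z‖ * C)
      · intro x
        exact ((cont_kk ν).mul
          (hfc.comp (continuous_const.sub continuous_id))).aestronglyMeasurable
      · intro x
        filter_upwards with z
        rw [norm_mul]
        exact mul_le_mul_of_nonneg_left (hfabs _) (norm_nonneg _)
      · exact intK.norm.mul_const C
      · filter_upwards with z
        exact continuous_const.mul (hfc.comp (continuous_sub_right z))
    have he : h = fun x => ∫ z, kk ν z * f (x - z) := funext fun x => hh x
    rw [he]; exact hcc
  have H_conv : ∀ x, H x = ∫ y, KK ν (x - y) * f y := by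
    intro x
    have prod_int_r : Integrable (fun p : ℝ × ℝ => kk ν (p.1 - p.2) * f p.2)
        ((volume.restrict (Iic x)).prod volume) := by
      have e2 : (volume.restrict (Iic x)).prod (volume : Measure ℝ)
          = (volume.prod volume).restrict (Iic x ×ˢ univ) := by
        rw [← Measure.prod_restrict, Measure.restrict_univ]
      rw [e2]
      exact prod_int.restrict
    have swap := integral_integral_swap (μ := volume.restrict (Iic x)) (ν := volume)
      (f := fun s y => kk ν (s - y) * f y) prod_int_r
    calc H x = ∫ s in Iic x, h s := hH x
      _ = ∫ s in Iic x, ∫ y, kk ν (s - y) * f y :=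
          integral_congr_ae (Eventually.of_forall fun s => h_conv s)
      _ = ∫ y, ∫ s in Iic x, kk ν (s - y) * f y := swap
      _ = ∫ y, KK ν (x - y) * f y := by
          congr 1; funext y
          rw [integral_mul_const]
          congr 1
          have hind : ∀ s : ℝ, (Iic x).indicator (fun s => kk ν (s - y)) s
              = (Iic (x - y)).indicator (kk ν) (s - y) := by
            intro s
            by_cases hs : s ∈ Iic x
            · rw [indicator_of_mem hs,
                indicator_of_mem (by simpa using sub_le_sub_right (mem_Iic.mp hs) y)]
            · rw [indicator_of_notMem hs, indicator_of_notMem (by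
                simp only [mem_Iic] at hs ⊢
                intro hcon
                exact hs (by linarith))]
          calc ∫ s in Iic x, kk ν (s - y)
              = ∫ s, (Iic x).indicator (fun s => kk ν (s - y)) s :=
                (integral_indicator measurableSet_Iic).symm
            _ = ∫ s, (Iic (x - y)).indicator (kk ν) (s - y) := by simp_rw [hind]
            _ = ∫ s, (Iic (x - y)).indicator (kk ν) s :=
                integral_sub_right_eq_self ((Iic (x - y)).indicator (kk ν)) y
            _ = ∫ s in Iic (x - y), kk ν s := integral_indicator measurableSet_Iic
            _ = KK ν (x - y) := integral_Iic_kk hν _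
  have HderivH : ∀ x, HasDerivAt H (h x) x := by
    have hHeq : H = fun x => (∫ s in Iic (0:ℝ), h s) + ∫ s in (0:ℝ)..x, h s := by
      funext x
      rw [hH x]
      have := intervalIntegral.integral_Iic_sub_Iic (μ := volume) (f := h) (a := (0:ℝ))
        (b := x) h_int.integrableOn h_int.integrableOn
      linarith
    intro x
    rw [hHeq]
    exact (intervalIntegral.integral_hasDerivAt_right h_int.intervalIntegrable
      (h_cont.stronglyMeasurableAtFilter _ _) h_cont.continuousAt).const_add _
  have Hderivh : ∀ x₀, HasDerivAt h (∫ y, kk' ν (x₀ - y) * f y) x₀ := by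
    intro x₀
    have he : h = fun x => ∫ y, kk ν (x - y) * f y := funext h_conv
    rw [he]
    refine (hasDerivAt_integral_of_dominated_loc_of_deriv_le (μ := volume)
      (F := fun x y => kk ν (x - y) * f y)
      (F' := fun x y => kk' ν (x - y) * f y)
      (x₀ := x₀) (s := Metric.ball x₀ 1) (bound := f) (Metric.ball_mem_nhds x₀ one_pos) ?_ ?_ ?_ ?_ hfi ?_).2
    · filter_upwards with x
      exact (((cont_kk ν).comp (continuous_const.sub continuous_id)).mul
        hfc).aestronglyMeasurable
    · refine Integrable.mono' ((intK.comp_sub_left x₀).norm.mul_const C)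
        ((((cont_kk ν).comp (continuous_const.sub continuous_id)).mul
          hfc).aestronglyMeasurable) ?_
      filter_upwards with y
      rw [norm_mul]
      exact mul_le_mul_of_nonneg_left (hfabs _) (norm_nonneg _)
    · exact (((cont_kk' ν).comp (continuous_const.sub continuous_id)).mul
        hfc).aestronglyMeasurable
    · filter_upwards with y
      intro x _
      rw [norm_mul]
      calc ‖kk' ν (x - y)‖ * ‖f y‖ ≤ 1 * ‖f y‖ :=
            mul_le_mul_of_nonneg_right (kk'_le hν _) (norm_nonneg _)
        _ = ‖f y‖ := one_mul _
        _ = f y := by rw [Real.norm_eq_abs, abs_of_nonneg (hnn y)]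
    · filter_upwards with y
      intro x _
      have hcomp := ((hasDerivAt_kk hν (x - y)).comp x
        ((hasDerivAt_id x).sub_const y)).mul_const (f y)
      simpa using hcomp
  have hderiv2 : ∀ x, deriv (deriv H) x = ∫ y, kk' ν (x - y) * f y := by
    intro x
    have hd : deriv H = h := funext fun x => (HderivH x).deriv
    rw [hd]
    exact (Hderivh x).deriv
  have ode : ∀ x, -(deriv (deriv H) x) + H x / ν ^ 2 = -2 * g x := by
    intro x
    rw [hderiv2 x, H_conv x, g_conv x]
    have intA : Integrable (fun y => kk' ν (x - y) * f y) := by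
      refine hfi.mono' ((((cont_kk' ν).comp (continuous_const.sub continuous_id)).mul
        hfc).aestronglyMeasurable) ?_
      filter_upwards with y
      rw [norm_mul]
      calc ‖kk' ν (x - y)‖ * ‖f y‖ ≤ 1 * ‖f y‖ :=
            mul_le_mul_of_nonneg_right (kk'_le hν _) (norm_nonneg _)
        _ = f y := by rw [one_mul, Real.norm_eq_abs, abs_of_nonneg (hnn y)]
    have intB : Integrable (fun y => KK ν (x - y) * f y) := by
      refine (hfi.const_mul (2 * ν ^ 2)).mono' ((((cont_KK ν).comp
        (continuous_const.sub continuous_id)).mul hfc).aestronglyMeasurable) ?_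
      filter_upwards with y
      rw [norm_mul]
      calc ‖KK ν (x - y)‖ * ‖f y‖ ≤ 2 * ν ^ 2 * ‖f y‖ :=
            mul_le_mul_of_nonneg_right (KK_le hν _) (norm_nonneg _)
        _ = 2 * ν ^ 2 * f y := by rw [Real.norm_eq_abs, abs_of_nonneg (hnn y)]
    rw [← integral_neg, ← integral_div]
    have e3 : (∫ a, -(kk' ν (x - a) * f a)) + (∫ a, KK ν (x - a) * f a / ν ^ 2)
        = ∫ a, (-(kk' ν (x - a) * f a) + KK ν (x - a) * f a / ν ^ 2) :=
      (integral_add intA.neg (intB.div_const _)).symm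
    rw [e3, ← integral_const_mul]
    congr 1; funext y
    have hid : -(kk' ν (x - y)) + KK ν (x - y) / ν ^ 2 = -2 * ee ν (x - y) := by
      simp only [kk', KK, ee]
      field_simp
      ring
    calc -(kk' ν (x - y) * f y) + KK ν (x - y) * f y / ν ^ 2
        = (-(kk' ν (x - y)) + KK ν (x - y) / ν ^ 2) * f y := by ring
      _ = (-2 * ee ν (x - y)) * f y := by rw [hid]
      _ = -2 * (ee ν (x - y) * f y) := by ring
  refine ⟨ode, ?_⟩
  have hHx : ∀ x, H x = ν ^ 2 * (deriv (deriv H) x - 2 * g x) := by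
    intro x
    have h0 := ode x
    have hν2 : ν ^ 2 ≠ 0 := by positivity
    field_simp at h0 ⊢
    linarith
  have h2 : Tendsto (fun x => ν ^ 2 * (deriv (deriv H) x - 2 * g x)) atBot (nhds 0) := by
    have := ((hH''_bot.sub (hg_bot.const_mul 2)).const_mul (ν ^ 2))
    simpa using this
  exact h2.congr (fun x => (hHx x).symm)
end
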